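/- Decomposition lemma: every finite tree t with dim(t) = 2m can be written as t = t'[t₁,...,tₙ] where dim(t') ≤ m and dim(tᵢ) ≤ m for all i. -/

import Mathlib

inductive RTree where
  | node : List RTree → RTree

/-- Dimension of a finite rooted tree: a leaf has dimension 0; a node with one
child has the dimension of that child; a node with at least two children has
dimension `d₁ + 1` if the two largest child dimensions `d₁ ≥ d₂` are equal,
and `d₁` otherwise. -/
def RTree.dim : RTree → ℕ
  | .node [] => 0
  | .node [t] => t.dim
  | .node ts =>
      let ds := ts.attach.map fun t => t.1.dim
      let d1 := ds.foldr max 0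
      let d2 := (ds.erase d1).foldr max 0
      if d1 = d2 then d1 + 1 else d1
decreasing_by
  · simp; omega
  · have := List.sizeOf_lt_of_mem t.2; simp at this ⊢; omega

mutual
/-- `Graft t' ts t` holds if `t` is obtained from `t'` by replacing its leaves,
in left-to-right order, by the trees in the list `ts` (i.e. `t = t'[t₁,…,tₙ]`). -/
inductive Graft : RTree → List RTree → RTree → Prop where
  | leaf (t : RTree) : Graft (.node []) [t] t
  | node {cs : List RTree} {ts : List RTree} {cs' : List RTree} :
      cs ≠ [] → GraftList cs ts cs' → Graft (.node cs) ts (.node cs')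

/-- Grafting performed on a list of trees, splitting the supply of attached trees. -/
inductive GraftList : List RTree → List RTree → List RTree → Prop where
  | nil : GraftList [] [] []
  | cons {c c' : RTree} {cs cs' : List RTree} {ts ts' : List RTree} :
      Graft c ts c' → GraftList cs ts' cs' → GraftList (c :: cs) (ts ++ ts') (c' :: cs')
end

/-! Strengthen the claim to: for every `m`, each tree `t` is `t'[t₁,…,tₙ]` with `dim tᵢ ≤ m` and
`dim t' + m ≤ max (dim t) m`, by induction on `t`. If `dim t ≤ m`, cut at the root. Otherwise
decompose every child and reassemble. The key fact is that `dim (node cs) ≤ v` iff every child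
has dimension `≤ v` and at most one child has dimension exactly `v`: a child of `t'` of dimension
`dim t - m ≥ 1` comes from a child of `t` of dimension `dim t`, and there is at most one of those.
-/

theorem List.Forall₂.countP_le_countP {α β : Type*} {R : α → β → Prop} {p : α → Bool}
    {q : β → Bool} {l₁ : List α} {l₂ : List β} (h : List.Forall₂ R l₁ l₂)
    (hpq : ∀ a b, R a b → p a → q b) : l₁.countP p ≤ l₂.countP q := by
  induction h with
  | nil => simp
  | @cons a b _ _ hab _ ih =>
    simp only [List.countP_cons]
    by_cases hp : p a
    · simp [hp, hpq a b hab hp, ih]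
    · simp only [hp, Bool.false_eq_true, if_false]
      split <;> omega

theorem List.Forall₂.exists_mem_right_of_mem_left {α β : Type*} {R : α → β → Prop}
    {l₁ : List α} {l₂ : List β} (h : List.Forall₂ R l₁ l₂) {a : α} (ha : a ∈ l₁) :
    ∃ b ∈ l₂, R a b := by
  induction h with
  | nil => simp at ha
  | @cons a' b _ _ hab _ ih =>
    rcases List.mem_cons.mp ha with rfl | ha
    · exact ⟨b, List.mem_cons_self, hab⟩
    · obtain ⟨b', hb', hab'⟩ := ih ha
      exact ⟨b', List.mem_cons_of_mem _ hb', hab'⟩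

theorem List.foldr_max_zero_le_iff {l : List ℕ} {v : ℕ} :
    l.foldr max 0 ≤ v ↔ ∀ d ∈ l, d ≤ v :=
  ⟨fun h _ hd => (List.le_max_of_le (α := ℕ) hd le_rfl).trans h,
    List.max_le_of_forall_le (α := ℕ) l v⟩

theorem List.foldr_max_zero_mem {l : List ℕ} (hl : l ≠ []) : l.foldr max 0 ∈ l :=
  List.maximum_mem (List.foldr_max_of_ne_nil (α := ℕ) hl).symm

theorem List.foldr_max_zero_erase_eq_iff {l : List ℕ} (hl : 2 ≤ l.length) :
    (l.erase (l.foldr max 0)).foldr max 0 = l.foldr max 0 ↔ 2 ≤ l.count (l.foldr max 0) := by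
  set M := l.foldr max 0
  have hM : M ∈ l := List.foldr_max_zero_mem (List.ne_nil_of_length_pos (by omega))
  have hcount : (l.erase M).count M = l.count M - 1 := List.count_erase_self
  have hle : (l.erase M).foldr max 0 ≤ M :=
    List.foldr_max_zero_le_iff.mpr fun d hd =>
      List.foldr_max_zero_le_iff.mp le_rfl d (List.mem_of_mem_erase hd)
  constructor
  · intro heq
    have hne : l.erase M ≠ [] := by
      rw [← List.length_pos_iff, List.length_erase_of_mem hM]
      omega
    have := List.foldr_max_zero_mem hne
    rw [heq, ← List.count_pos_iff] at this
    omega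
  · intro h2
    have hmem : M ∈ l.erase M := List.count_pos_iff.mp (by omega)
    exact le_antisymm hle (List.le_max_of_le (α := ℕ) hmem le_rfl)

theorem List.strahler_le_iff {l : List ℕ} (hl : 2 ≤ l.length) {v : ℕ} :
    (if l.foldr max 0 = (l.erase (l.foldr max 0)).foldr max 0 then l.foldr max 0 + 1
      else l.foldr max 0) ≤ v ↔ (∀ d ∈ l, d ≤ v) ∧ l.count v ≤ 1 := by
  rw [← List.foldr_max_zero_le_iff]
  have key := List.foldr_max_zero_erase_eq_iff hl
  set M := l.foldr max 0
  rcases lt_trichotomy M v with hlt | rfl | hgt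
  · have : l.count v = 0 := List.count_eq_zero.mpr fun hv =>
      (List.le_max_of_le (α := ℕ) hv le_rfl).not_gt hlt
    split_ifs <;> omega
  · split_ifs with h
    · have := key.mp h.symm
      omega
    · have := mt key.mpr (Ne.symm h)
      omega
  · split_ifs <;> omega

namespace RTree

theorem dim_cons_cons (a b : RTree) (l : List RTree) :
    (node (a :: b :: l)).dim =
      let ds := (a :: b :: l).map dim
      if ds.foldr max 0 = (ds.erase (ds.foldr max 0)).foldr max 0 then ds.foldr max 0 + 1
      else ds.foldr max 0 := by
  rw [dim] <;> simp

theorem dim_node_le_iff {cs : List RTree} {v : ℕ} :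
    (node cs).dim ≤ v ↔ (∀ c ∈ cs, c.dim ≤ v) ∧ cs.countP (·.dim = v) ≤ 1 := by
  match cs with
  | [] => simp [dim]
  | [c] => simp [dim, ite_le_one]
  | a :: b :: l =>
    rw [dim_cons_cons, List.strahler_le_iff (by simp), List.forall_mem_map, List.count, List.countP_map]
    rfl

theorem dim_node_add_le_of_forall₂ {m : ℕ} {cs' cs : List RTree}
    (h : List.Forall₂ (fun c' c => c'.dim + m ≤ max c.dim m) cs' cs) (hm : m < (node cs).dim) :
    (node cs').dim + m ≤ (node cs).dim := by
  set L := (node cs).dim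
  obtain ⟨hchildren, hcount⟩ := dim_node_le_iff.mp (le_refl L)
  suffices (node cs').dim ≤ L - m by omega
  refine dim_node_le_iff.mpr ⟨fun c' hc' => ?_, ?_⟩
  · obtain ⟨c, hc, hrel⟩ := h.exists_mem_right_of_mem_left hc'
    have := hchildren c hc
    omega
  · calc cs'.countP (·.dim = L - m)
        ≤ cs.countP (L ≤ ·.dim) := h.countP_le_countP fun c' c hrel hc' => by
          simp only [decide_eq_true_eq] at hc' ⊢
          omega
      _ ≤ cs.countP (·.dim = L) := List.countP_mono_left fun c hc hLc => by
          simp only [decide_eq_true_eq] at hLc ⊢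
          exact le_antisymm (hchildren c hc) hLc
      _ ≤ 1 := hcount

variable (m : ℕ)

mutual

theorem exists_graft_dim_add_le : ∀ t : RTree,
    ∃ t' ts, Graft t' ts t ∧ t'.dim + m ≤ max t.dim m ∧ ∀ u ∈ ts, u.dim ≤ m
  | node cs => by
    by_cases hle : (node cs).dim ≤ m
    · exact ⟨node [], [node cs], .leaf _, by simp [dim], by simpa using hle⟩
    obtain ⟨cs', ts, hgraft, hrel, hts⟩ := exists_graftList_dim_add_le cs
    have hne : cs' ≠ [] := by
      rintro rfl
      cases hrel
      simp [dim] at hle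
    refine ⟨node cs', ts, .node hne hgraft, ?_, hts⟩
    have := dim_node_add_le_of_forall₂ hrel (by omega)
    omega

theorem exists_graftList_dim_add_le : ∀ cs : List RTree,
    ∃ cs' ts, GraftList cs' ts cs ∧ List.Forall₂ (fun c' c => c'.dim + m ≤ max c.dim m) cs' cs ∧
      ∀ u ∈ ts, u.dim ≤ m
  | [] => ⟨[], [], .nil, .nil, by simp⟩
  | c :: cs => by
    obtain ⟨c', ts, hgraft, hdim, hts⟩ := exists_graft_dim_add_le c
    obtain ⟨cs', ts', hgraft', hrel, hts'⟩ := exists_graftList_dim_add_le cs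
    exact ⟨c' :: cs', ts ++ ts', .cons hgraft hgraft', .cons hdim hrel,
      List.forall_mem_append.mpr ⟨hts, hts'⟩⟩

end

end RTree

/-- Decomposition lemma: every finite tree `t` with `dim t = 2m` can be written
as `t = t'[t₁,…,tₙ]` where `dim t' ≤ m` and `dim tᵢ ≤ m` for all `i`. -/
theorem tree_decomposition (t : RTree) (m : ℕ) (h : t.dim = 2 * m) :
    ∃ (t' : RTree) (ts : List RTree),
      Graft t' ts t ∧ t'.dim ≤ m ∧ ∀ u ∈ ts, u.dim ≤ m := by
  obtain ⟨t', ts, hgraft, hdim, hts⟩ := t.exists_graft_dim_add_le m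
  exact ⟨t', ts, hgraft, by omega, hts⟩
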